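/- arXiv:2103.02210 — 2 statements merged into one kernel-verified Lean document; each statement's English description precedes it below -/
import Mathlib

section
/- Discrete skew-symmetry of the 1D convection stencil: for an edge-centered function u vanishing at the boundary edges (u ∈ E^{ew0}_{x×y}), the discrete convection term satisfies [u·D_x(a_x u) + A_x(d_x(u u)), u]_{ew} = 0. -/
open Finset

noncomputable section

/-! Staggered-grid finite-difference operators on a uniform `N_x × N_y` mesh with spacings
`h_x, h_y`.  Grid functions are modelled as `ℤ → ℤ → ℝ`.  For cell-centered functions the
index `(i,j)` denotes the cell center `(x_i, y_j)`; for east–west edge functions the first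
index `i` denotes the edge abscissa `x_{i+1/2}`; for north–south edge functions the second
index `j` denotes the edge ordinate `y_{j+1/2}`; vertex functions use both conventions. -/

/-- Edge-to-center average in `x`: `(a_x w)_{i,j} = (w_{i+1/2,j} + w_{i-1/2,j})/2`. -/
def axOp (w : ℤ → ℤ → ℝ) : ℤ → ℤ → ℝ := fun i j => (w i j + w (i - 1) j) / 2

/-- Edge-to-center difference in `x`: `(d_x w)_{i,j} = (w_{i+1/2,j} − w_{i-1/2,j})/h_x`. -/
def dxOp (hx : ℝ) (w : ℤ → ℤ → ℝ) : ℤ → ℤ → ℝ := fun i j => (w i j - w (i - 1) j) / hx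

/-- Center-to-edge average in `x`: `(A_x φ)_{i+1/2,j} = (φ_{i+1,j} + φ_{i,j})/2`. -/
def AxOp (φ : ℤ → ℤ → ℝ) : ℤ → ℤ → ℝ := fun i j => (φ (i + 1) j + φ i j) / 2

/-- Center-to-edge difference in `x`: `(D_x φ)_{i+1/2,j} = (φ_{i+1,j} − φ_{i,j})/h_x`. -/
def DxOp (hx : ℝ) (φ : ℤ → ℤ → ℝ) : ℤ → ℤ → ℝ := fun i j => (φ (i + 1) j - φ i j) / hx

/-- Edge-to-center average in `y`. -/
def ayOp (w : ℤ → ℤ → ℝ) : ℤ → ℤ → ℝ := fun i j => (w i j + w i (j - 1)) / 2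

/-- Edge-to-center difference in `y`. -/
def dyOp (hy : ℝ) (w : ℤ → ℤ → ℝ) : ℤ → ℤ → ℝ := fun i j => (w i j - w i (j - 1)) / hy

/-- Center-to-edge average in `y`. -/
def AyOp (φ : ℤ → ℤ → ℝ) : ℤ → ℤ → ℝ := fun i j => (φ i (j + 1) + φ i j) / 2

/-- Center-to-edge difference in `y`. -/
def DyOp (hy : ℝ) (φ : ℤ → ℤ → ℝ) : ℤ → ℤ → ℝ := fun i j => (φ i (j + 1) - φ i j) / hy

/-- The discrete cell-centered inner product
`(φ,ψ)₂ = h_x h_y ∑_{i=1}^{N_x} ∑_{j=1}^{N_y} φ_{i,j} ψ_{i,j}`. -/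
def ip2 (Nx Ny : ℕ) (hx hy : ℝ) (f g : ℤ → ℤ → ℝ) : ℝ :=
  hx * hy * ∑ i ∈ Icc (1 : ℤ) (Nx : ℤ), ∑ j ∈ Icc (1 : ℤ) (Ny : ℤ), f i j * g i j

/-- The east–west edge inner product `[u,r]_{ew} = (a_x(u r), 1)₂`. -/
def ipew (Nx Ny : ℕ) (hx hy : ℝ) (f g : ℤ → ℤ → ℝ) : ℝ :=
  ip2 Nx Ny hx hy (axOp (f * g)) 1

/-- The north–south edge inner product `[v,w]_{ns} = (a_y(v w), 1)₂`. -/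
def ipns (Nx Ny : ℕ) (hx hy : ℝ) (f g : ℤ → ℤ → ℝ) : ℝ :=
  ip2 Nx Ny hx hy (ayOp (f * g)) 1

/-- The vertex inner product `⟨f,g⟩_{vc} = (a_x(a_y(f g)), 1)₂`. -/
def ipvc (Nx Ny : ℕ) (hx hy : ℝ) (f g : ℤ → ℤ → ℝ) : ℝ :=
  ip2 Nx Ny hx hy (axOp (ayOp (f * g))) 1

/-! Both convection terms are moved onto the cell-centered grid by the summation-by-parts
identities `[A_x φ, w]_{ew} = (φ, a_x w)₂` and `[D_x φ, w]_{ew} = −(φ, d_x w)₂`, valid when `w`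
vanishes at the boundary edges. Applied with `φ = a_x u, w = u u` and `φ = d_x(u u), w = u`,
they turn the two terms into `−(a_x u, d_x(u u))₂` and `(d_x(u u), a_x u)₂`, which cancel. -/

theorem Finset.sum_Icc_sub_pred {M : Type*} [AddCommGroup M] (f : ℤ → M) {a b : ℤ}
    (hab : a ≤ b + 1) : ∑ i ∈ Icc a b, (f i - f (i - 1)) = f b - f (a - 1) := by
  induction b, (show a - 1 ≤ b by omega) using Int.leInduction with
  | base => simp
  | succ n hn ih =>
    rw [← insert_Icc_right_eq_Icc_add_one (by omega), sum_insert (by simp),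
      ih (by omega), add_sub_cancel_right]
    abel

theorem sum_Icc_sum_eq_of_sub_eq_sub_pred {M : Type*} [AddCommGroup M] (n : ℕ) (s : Finset ℤ)
    {a b F : ℤ → ℤ → M} (hF0 : ∀ j, F 0 j = 0) (hFn : ∀ j, F n j = 0)
    (hab : ∀ i j, a i j - b i j = F i j - F (i - 1) j) :
    ∑ i ∈ Icc (1 : ℤ) n, ∑ j ∈ s, a i j = ∑ i ∈ Icc (1 : ℤ) n, ∑ j ∈ s, b i j := by
  rw [← sub_eq_zero, ← sum_sub_distrib]
  simp_rw [← sum_sub_distrib, hab]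
  rw [sum_comm]
  refine sum_eq_zero fun j _ => ?_
  rw [sum_Icc_sub_pred (F · j) (by omega), sub_self, hF0, hFn, sub_zero]

section EdgeInnerProduct

variable {Nx Ny : ℕ} {hx hy : ℝ}

theorem ipew_eq_ip2 {f w : ℤ → ℤ → ℝ} (hw0 : ∀ j, w 0 j = 0) (hwN : ∀ j, w Nx j = 0) :
    ipew Nx Ny hx hy f w = ip2 Nx Ny hx hy f w := by
  unfold ipew ip2
  congr 1
  refine sum_Icc_sum_eq_of_sub_eq_sub_pred Nx _ (F := fun i j => -(f i j * w i j) / 2)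
    (by simp [hw0]) (by simp [hwN]) fun i j => ?_
  simp only [axOp, Pi.mul_apply, Pi.one_apply]
  ring

theorem ipew_add_left (f g w : ℤ → ℤ → ℝ) :
    ipew Nx Ny hx hy (f + g) w = ipew Nx Ny hx hy f w + ipew Nx Ny hx hy g w := by
  simp only [ipew, ip2, axOp, Pi.mul_apply, Pi.add_apply, Pi.one_apply, mul_one, ← mul_add,
    ← sum_add_distrib]
  congr 1
  refine sum_congr rfl fun i _ => sum_congr rfl fun j _ => ?_
  ring

theorem ipew_mul_left (f g w : ℤ → ℤ → ℝ) :
    ipew Nx Ny hx hy (g * f) w = ipew Nx Ny hx hy f (g * w) := by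
  rw [ipew, ipew, mul_comm g f, mul_assoc]

theorem ipew_AxOp_left {φ w : ℤ → ℤ → ℝ} (hw0 : ∀ j, w 0 j = 0) (hwN : ∀ j, w Nx j = 0) :
    ipew Nx Ny hx hy (AxOp φ) w = ip2 Nx Ny hx hy φ (axOp w) := by
  rw [ipew_eq_ip2 hw0 hwN, ip2, ip2]
  congr 1
  refine sum_Icc_sum_eq_of_sub_eq_sub_pred Nx _ (F := fun i j => φ (i + 1) j * w i j / 2)
    (by simp [hw0]) (by simp [hwN]) fun i j => ?_
  simp only [AxOp, axOp, sub_add_cancel]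
  ring

theorem ipew_DxOp_left {φ w : ℤ → ℤ → ℝ} (hw0 : ∀ j, w 0 j = 0) (hwN : ∀ j, w Nx j = 0) :
    ipew Nx Ny hx hy (DxOp hx φ) w = -ip2 Nx Ny hx hy φ (dxOp hx w) := by
  rw [ipew_eq_ip2 hw0 hwN, ip2, ip2, ← mul_neg, ← sum_neg_distrib]
  simp_rw [← sum_neg_distrib]
  congr 1
  refine sum_Icc_sum_eq_of_sub_eq_sub_pred Nx _ (F := fun i j => φ (i + 1) j * w i j / hx)
    (by simp [hw0]) (by simp [hwN]) fun i j => ?_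
  simp only [DxOp, dxOp, sub_add_cancel]
  ring

theorem ip2_comm (f g : ℤ → ℤ → ℝ) : ip2 Nx Ny hx hy f g = ip2 Nx Ny hx hy g f := by
  simp only [ip2, mul_comm (f _ _)]

end EdgeInnerProduct

theorem stmt6_general (Nx Ny : ℕ) (hx hy : ℝ)
    (u : ℤ → ℤ → ℝ)
    (hu0 : ∀ j, u 0 j = 0) (huN : ∀ j, u (Nx : ℤ) j = 0) :
    ipew Nx Ny hx hy (u * DxOp hx (axOp u) + AxOp (dxOp hx (u * u))) u = 0 := by
  have huu0 : ∀ j, (u * u) 0 j = 0 := by simp [hu0]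
  have huuN : ∀ j, (u * u) Nx j = 0 := by simp [huN]
  rw [ipew_add_left, ipew_mul_left, ipew_DxOp_left huu0 huuN, ipew_AxOp_left hu0 huN, ip2_comm,
    neg_add_cancel]

/-- Discrete skew-symmetry of the 1D convection stencil: for an east–west edge-centered
function `u` vanishing at the boundary edges (`u_{1/2,j} = u_{N_x+1/2,j} = 0`, i.e.
`u 0 j = u Nx j = 0` in our edge-index convention), the discrete convection term satisfies
`[u·D_x(a_x u) + A_x(d_x(u u)), u]_{ew} = 0`. -/
theorem stmt6 (Nx Ny : ℕ) (hx hy : ℝ) (hhx : 0 < hx) (hhy : 0 < hy)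
    (u : ℤ → ℤ → ℝ)
    (hu0 : ∀ j, u 0 j = 0) (huN : ∀ j, u (Nx : ℤ) j = 0) :
    ipew Nx Ny hx hy (u * DxOp hx (axOp u) + AxOp (dxOp hx (u * u))) u = 0 :=
  stmt6_general Nx Ny hx hy u hu0 huN
end
end

section
/- The semi-discrete staggered-grid scheme for the Cahn-Hilliard-Navier-Stokes system conserves total discrete mass: if (d/dt)φ_{i,j} + d_x(A_xφ u)_{i,j} + d_y(A_yφ v)_{i,j} = d_x(M(A_xφ) D_x μ)_{i,j} + d_y(M(A_yφ) D_y μ)_{i,j} with u ∈ E^{ew0}, v ∈ E^{ns0}, and D_xμ, D_yμ vanishing at boundary edges, then (d/dt)(φ, 1)₂ = 0. -/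
open Finset

noncomputable section

/-! The scheme is in conservation form: on every interior cell `φt = d_x F_x + d_y F_y` with the
edge fluxes `F_x = M(A_xφ) D_xμ − A_xφ u` and `F_y = M(A_yφ) D_yμ − A_yφ v`. Both fluxes vanish on
the boundary edges, so summing the edge-to-center differences over the cells telescopes to zero. -/

theorem sum_Icc_one_sub_pred {G : Type*} [AddCommGroup G] (f : ℤ → G) (N : ℕ) :
    ∑ i ∈ Icc (1 : ℤ) N, (f i - f (i - 1)) = f N - f 0 := by
  induction N with
  | zero => simp
  | succ n ih =>
    rw [Nat.cast_succ, ← Finset.insert_Icc_right_eq_Icc_add_one (by omega),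
      sum_insert (by simp), ih, add_sub_cancel_right]
    abel

theorem dxOp_sub (hx : ℝ) (f g : ℤ → ℤ → ℝ) : dxOp hx (f - g) = dxOp hx f - dxOp hx g := by
  ext i j
  simp only [dxOp, Pi.sub_apply]
  ring

theorem dyOp_sub (hy : ℝ) (f g : ℤ → ℤ → ℝ) : dyOp hy (f - g) = dyOp hy f - dyOp hy g := by
  ext i j
  simp only [dyOp, Pi.sub_apply]
  ring

section ip2

variable {Nx Ny : ℕ} {hx hy : ℝ}

theorem ip2_add_left (f f' g : ℤ → ℤ → ℝ) :
    ip2 Nx Ny hx hy (f + f') g = ip2 Nx Ny hx hy f g + ip2 Nx Ny hx hy f' g := by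
  simp only [ip2, Pi.add_apply, add_mul, sum_add_distrib, mul_add]

theorem ip2_congr_left {f f' : ℤ → ℤ → ℝ} (g : ℤ → ℤ → ℝ)
    (h : ∀ i ∈ Icc (1 : ℤ) Nx, ∀ j ∈ Icc (1 : ℤ) Ny, f i j = f' i j) :
    ip2 Nx Ny hx hy f g = ip2 Nx Ny hx hy f' g := by
  unfold ip2
  congr 1
  exact sum_congr rfl fun i hi => sum_congr rfl fun j hj => by rw [h i hi j hj]

theorem ip2_dxOp_one_eq_zero {w : ℤ → ℤ → ℝ} (hw0 : ∀ j, w 0 j = 0) (hwN : ∀ j, w Nx j = 0) :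
    ip2 Nx Ny hx hy (dxOp hx w) 1 = 0 := by
  simp only [ip2, dxOp, Pi.one_apply, mul_one]
  rw [sum_comm]
  simp only [← sum_div, sum_Icc_one_sub_pred (w · _), hw0, hwN, sub_zero, zero_div, sum_const_zero,
    mul_zero]

theorem ip2_dyOp_one_eq_zero {w : ℤ → ℤ → ℝ} (hw0 : ∀ i, w i 0 = 0) (hwN : ∀ i, w i Ny = 0) :
    ip2 Nx Ny hx hy (dyOp hy w) 1 = 0 := by
  simp only [ip2, dyOp, Pi.one_apply, mul_one]
  simp only [← sum_div, sum_Icc_one_sub_pred (w _ ·), hw0, hwN, sub_zero, zero_div, sum_const_zero,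
    mul_zero]

theorem hasDerivAt_ip2 {φ : ℝ → ℤ → ℤ → ℝ} {φ' : ℤ → ℤ → ℝ} {t : ℝ} (g : ℤ → ℤ → ℝ)
    (hφ : ∀ i j, HasDerivAt (fun s => φ s i j) (φ' i j) t) :
    HasDerivAt (fun s => ip2 Nx Ny hx hy (φ s) g) (ip2 Nx Ny hx hy φ' g) t :=
  (HasDerivAt.fun_sum fun i _ => HasDerivAt.fun_sum fun j _ =>
    (hφ i j).mul_const (g i j)).const_mul (hx * hy)

end ip2

theorem stmt7_general (Nx Ny : ℕ) (hx hy : ℝ)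
    (φ φt u v μ : ℝ → ℤ → ℤ → ℝ) (M : ℝ → ℝ)
    (hu0 : ∀ t j, u t 0 j = 0) (huN : ∀ t j, u t (Nx : ℤ) j = 0)
    (hv0 : ∀ t i, v t i 0 = 0) (hvN : ∀ t i, v t i (Ny : ℤ) = 0)
    (hμx0 : ∀ t j, DxOp hx (μ t) 0 j = 0) (hμxN : ∀ t j, DxOp hx (μ t) (Nx : ℤ) j = 0)
    (hμy0 : ∀ t i, DyOp hy (μ t) i 0 = 0) (hμyN : ∀ t i, DyOp hy (μ t) i (Ny : ℤ) = 0)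
    (hderiv : ∀ t i j, HasDerivAt (fun s => φ s i j) (φt t i j) t)
    (hscheme : ∀ t, ∀ i ∈ Icc (1 : ℤ) (Nx : ℤ), ∀ j ∈ Icc (1 : ℤ) (Ny : ℤ),
      φt t i j + dxOp hx (AxOp (φ t) * u t) i j + dyOp hy (AyOp (φ t) * v t) i j
        = dxOp hx ((fun a b => M (AxOp (φ t) a b)) * DxOp hx (μ t)) i j
          + dyOp hy ((fun a b => M (AyOp (φ t) a b)) * DyOp hy (μ t)) i j) :
    ∀ t, HasDerivAt (fun s => ip2 Nx Ny hx hy (φ s) 1) 0 t := by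
  intro t
  set Fx := (fun a b => M (AxOp (φ t) a b)) * DxOp hx (μ t) - AxOp (φ t) * u t
  set Fy := (fun a b => M (AyOp (φ t) a b)) * DyOp hy (μ t) - AyOp (φ t) * v t
  have hconservative : ∀ i ∈ Icc (1 : ℤ) Nx, ∀ j ∈ Icc (1 : ℤ) Ny,
      φt t i j = (dxOp hx Fx + dyOp hy Fy) i j := by
    intro i hi j hj
    simp only [Fx, Fy, dxOp_sub, dyOp_sub, Pi.add_apply, Pi.sub_apply]
    linarith [hscheme t i hi j hj]
  have hmass : ip2 Nx Ny hx hy (φt t) 1 = 0 := by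
    rw [ip2_congr_left 1 hconservative, ip2_add_left,
      ip2_dxOp_one_eq_zero (by simp [Fx, hu0, hμx0]) (by simp [Fx, huN, hμxN]),
      ip2_dyOp_one_eq_zero (by simp [Fy, hv0, hμy0]) (by simp [Fy, hvN, hμyN]), add_zero]
  exact hmass ▸ hasDerivAt_ip2 1 (hderiv t)

/-- The semi-discrete staggered-grid scheme for the Cahn–Hilliard–Navier–Stokes system
conserves total discrete mass: if
`(d/dt)φ_{i,j} + d_x(A_xφ u)_{i,j} + d_y(A_yφ v)_{i,j}
  = d_x(M(A_xφ) D_x μ)_{i,j} + d_y(M(A_yφ) D_y μ)_{i,j}`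
on the interior cells, with `u ∈ E^{ew0}` and `v ∈ E^{ns0}` (vanishing boundary edge
values) and `D_xμ`, `D_yμ` vanishing at the boundary edges, then `(d/dt)(φ, 1)₂ = 0`. -/
theorem stmt7 (Nx Ny : ℕ) (hx hy : ℝ) (hhx : 0 < hx) (hhy : 0 < hy)
    (φ φt u v μ : ℝ → ℤ → ℤ → ℝ) (M : ℝ → ℝ) (hM : ∀ s, 0 ≤ M s)
    (hu0 : ∀ t j, u t 0 j = 0) (huN : ∀ t j, u t (Nx : ℤ) j = 0)
    (hv0 : ∀ t i, v t i 0 = 0) (hvN : ∀ t i, v t i (Ny : ℤ) = 0)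
    (hμx0 : ∀ t j, DxOp hx (μ t) 0 j = 0) (hμxN : ∀ t j, DxOp hx (μ t) (Nx : ℤ) j = 0)
    (hμy0 : ∀ t i, DyOp hy (μ t) i 0 = 0) (hμyN : ∀ t i, DyOp hy (μ t) i (Ny : ℤ) = 0)
    (hderiv : ∀ t i j, HasDerivAt (fun s => φ s i j) (φt t i j) t)
    (hscheme : ∀ t, ∀ i ∈ Icc (1 : ℤ) (Nx : ℤ), ∀ j ∈ Icc (1 : ℤ) (Ny : ℤ),
      φt t i j + dxOp hx (AxOp (φ t) * u t) i j + dyOp hy (AyOp (φ t) * v t) i j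
        = dxOp hx ((fun a b => M (AxOp (φ t) a b)) * DxOp hx (μ t)) i j
          + dyOp hy ((fun a b => M (AyOp (φ t) a b)) * DyOp hy (μ t)) i j) :
    ∀ t, HasDerivAt (fun s => ip2 Nx Ny hx hy (φ s) 1) 0 t :=
  stmt7_general Nx Ny hx hy φ φt u v μ M hu0 huN hv0 hvN hμx0 hμxN hμy0 hμyN hderiv hscheme
end
end
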